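/- Let S ⊆ ℕ^n (viewed inside ℝ^n) be a finite downward-closed set: if s ∈ S, t ∈ ℕ^n, and t ≤ s entrywise, then t ∈ S. Let x ∈ convexHull ℝ S and let Λ ∈ ℝ^n satisfy 0 < Λ_i < x_i for every coordinate i. Then Λ lies in the interior of convexHull ℝ S. -/

import Mathlib

/-!
Every lattice point below some `s ∈ S` lies in `S`, so the box `[0, s]`, the convex hull of its
vertices, lies in `convexHull ℝ S`. For `x` in the hull and `0 ≤ y ≤ x`, the coordinatewise scaling
`v ↦ (y / x) * v` maps `x` to `y` and each `s ∈ S` into `[0, s]`, so the box `[0, x]` lies in the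
hull as well; the open box `(0, x)` is then a neighbourhood of `Λ` inside the hull.
-/

open Set

variable {ι : Type*}

theorem Icc_zero_eq_convexHull_pi [Finite ι] {s : ι → ℝ} (hs : 0 ≤ s) :
    Icc 0 s = convexHull ℝ (univ.pi fun i => ({0, s i} : Set ℝ)) := by
  rw [convexHull_pi, ← pi_univ_Icc]
  exact pi_congr rfl fun i _ => by
    rw [convexHull_pair]
    exact (segment_eq_Icc (hs i)).symm

theorem Icc_zero_subset_convexHull_of_corners_subset [Finite ι] {S : Set (ι → ℝ)} {s : ι → ℝ}
    (hs : 0 ≤ s) (hcorners : univ.pi (fun i => ({0, s i} : Set ℝ)) ⊆ S) :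
    Icc 0 s ⊆ convexHull ℝ S :=
  (Icc_zero_eq_convexHull_pi hs).trans_subset (convexHull_mono hcorners)

theorem Icc_zero_subset_convexHull_of_mem_convexHull {S : Set (ι → ℝ)}
    (hS₀ : ∀ s ∈ S, 0 ≤ s) (hbox : ∀ s ∈ S, Icc 0 s ⊆ convexHull ℝ S)
    {x : ι → ℝ} (hx : x ∈ convexHull ℝ S) : Icc 0 x ⊆ convexHull ℝ S := by
  have hx₀ : 0 ≤ x := convexHull_min hS₀ (convex_Ici 0) hx
  rintro y ⟨hy₀, hyx⟩
  let t : ι → ℝ := y / x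
  have ht₀ : 0 ≤ t := fun i => div_nonneg (hy₀ i) (hx₀ i)
  have ht₁ : t ≤ 1 := fun i => div_le_one_of_le₀ (hyx i) (hx₀ i)
  -- where `x i = 0` also `y i = 0`, and the junk value `y i / 0 = 0` still gives `t i * x i = y i`
  have hty : t * x = y := funext fun i => by
    rcases (hx₀ i).eq_or_lt with hxi | hxi
    · have hyi : y i = 0 := le_antisymm ((hyx i).trans hxi.ge) (hy₀ i)
      simp [← hxi, hyi]
    · exact div_mul_cancel₀ (y i) hxi.ne'
  have hscale : LinearMap.mulLeft ℝ t '' S ⊆ convexHull ℝ S := by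
    rintro _ ⟨s, hs, rfl⟩
    refine hbox s hs ⟨mul_nonneg ht₀ (hS₀ s hs), fun i => ?_⟩
    exact mul_le_of_le_one_left (hS₀ s hs i) (ht₁ i)
  have hyim : y ∈ convexHull ℝ (LinearMap.mulLeft ℝ t '' S) := by
    rw [← LinearMap.image_convexHull, ← hty]
    exact mem_image_of_mem _ hx
  exact convexHull_min hscale (convex_convexHull ℝ S) hyim

theorem mem_interior_Icc_pi [Finite ι] {a b c : ι → ℝ} (h : ∀ i, a i < c i ∧ c i < b i) :
    c ∈ interior (Icc a b) := by
  rw [← pi_univ_Icc, interior_pi_set finite_univ]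
  simpa [interior_Icc] using h

theorem stmt_13_general (n : ℕ) (S : Set (Fin n → ℝ))
    (hnat : ∀ s ∈ S, ∀ i, ∃ m : ℕ, s i = (m : ℝ))
    (hdown : ∀ s ∈ S, ∀ t : Fin n → ℕ, (∀ i, (t i : ℝ) ≤ s i) →
      (fun i => ((t i : ℕ) : ℝ)) ∈ S)
    (x : Fin n → ℝ) (hx : x ∈ convexHull ℝ S)
    (Λ : Fin n → ℝ) (hΛ : ∀ i, 0 < Λ i ∧ Λ i < x i) :
    Λ ∈ interior (convexHull ℝ S) := by
  have hS₀ : ∀ s ∈ S, 0 ≤ s := fun s hs i => by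
    obtain ⟨m, hm⟩ := hnat s hs i
    exact hm ▸ m.cast_nonneg
  have hcorners : ∀ s ∈ S, univ.pi (fun i => ({0, s i} : Set ℝ)) ⊆ S := by
    intro s hs v hv
    choose m hm using hnat s hs
    have hlattice : ∀ i, ∃ k : ℕ, (k : ℝ) = v i ∧ (k : ℝ) ≤ s i := fun i => by
      rcases hv i (mem_univ i) with h | h
      · exact ⟨0, by simp [h], by simpa using hS₀ s hs i⟩
      · exact ⟨m i, by rw [h, hm i], (hm i).ge⟩
    choose k hkv hks using hlattice
    simpa only [hkv] using hdown s hs k hks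
  have hbox : ∀ s ∈ S, Icc 0 s ⊆ convexHull ℝ S := fun s hs =>
    Icc_zero_subset_convexHull_of_corners_subset (hS₀ s hs) (hcorners s hs)
  exact interior_mono (Icc_zero_subset_convexHull_of_mem_convexHull hS₀ hbox hx)
    (mem_interior_Icc_pi hΛ)

/-- For a finite downward-closed set `S ⊆ ℕⁿ`, entrywise strict dominance
`0 < Λ < x` with `x` in the convex hull puts `Λ` in the interior of the hull. -/
theorem stmt_13 (n : ℕ) (S : Set (Fin n → ℝ)) (hS : S.Finite)
    (hnat : ∀ s ∈ S, ∀ i, ∃ m : ℕ, s i = (m : ℝ))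
    (hdown : ∀ s ∈ S, ∀ t : Fin n → ℕ, (∀ i, (t i : ℝ) ≤ s i) →
      (fun i => ((t i : ℕ) : ℝ)) ∈ S)
    (x : Fin n → ℝ) (hx : x ∈ convexHull ℝ S)
    (Λ : Fin n → ℝ) (hΛ : ∀ i, 0 < Λ i ∧ Λ i < x i) :
    Λ ∈ interior (convexHull ℝ S) :=
  stmt_13_general n S hnat hdown x hx Λ hΛ
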